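/- arXiv:1807.01749 — 9 statements merged into one kernel-verified Lean document; each statement's English description precedes it below -/
import Mathlib

section
/- For any two distinct vertices x and y of a graph G, fun(x) ≤ 1 + |N(x) ⊗ N(y)|, where N(x) ⊗ N(y) denotes the set of vertices different from x and y adjacent to exactly one of x and y; specifically, x is a function of {y} ∪ (N(x) ⊗ N(y)). -/
/-!
Off `{x, y} ∪ N(x) ⊗ N(y)` the vertices `x` and `y` have the same neighbours, so there the
adjacency of `x` is read off from that of `y`: the Boolean function is the projection onto the
coordinate `y`.
-/

open scoped Classical

/-- The Boolean adjacency indicator of a graph. -/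
noncomputable def adjB {V : Type*} (G : SimpleGraph V) (x z : V) : Bool :=
  if G.Adj x z then true else false

/-- A vertex `y` is a function of the set `S` of vertices: there is a Boolean
function `f` of the variables indexed by `S` such that the adjacency of `y`
to any vertex `z` outside `{y} ∪ S` equals `f` applied to the adjacencies
of the members of `S` to `z`. -/
def FunctionOf {V : Type*} (G : SimpleGraph V) (y : V) (S : Finset V) : Prop :=
  y ∉ S ∧ ∃ f : (S → Bool) → Bool, ∀ z, z ≠ y → z ∉ S →
    (G.Adj y z ↔ f (fun s => adjB G s.1 z) = true)

/-- `fun(y) ≤ k` : the functionality of vertex `y` is at most `k`. -/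
def VertexFunLE {V : Type*} (G : SimpleGraph V) (y : V) (k : ℕ) : Prop :=
  ∃ S : Finset V, S.card ≤ k ∧ FunctionOf G y S

section

variable {V : Type*} {G : SimpleGraph V}

@[simp]
theorem adjB_eq_true {x z : V} : adjB G x z = true ↔ G.Adj x z := by
  simp [adjB]

theorem FunctionOf.vertexFunLE {x : V} {S : Finset V} (h : FunctionOf G x S) :
    VertexFunLE G x S.card :=
  ⟨S, le_rfl, h⟩

theorem VertexFunLE.mono {x : V} {k m : ℕ} (h : VertexFunLE G x k) (hkm : k ≤ m) :
    VertexFunLE G x m :=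
  let ⟨S, hS, hS_fun⟩ := h
  ⟨S, hS.trans hkm, hS_fun⟩

theorem functionOf_insert_of_adj_iff {x y : V} {D : Finset V} (hxy : x ≠ y) (hxD : x ∉ D)
    (hagree : ∀ z, z ≠ x → z ≠ y → z ∉ D → (G.Adj x z ↔ G.Adj y z)) :
    FunctionOf G x (insert y D) := by
  refine ⟨by simp [hxy, hxD], fun g => g ⟨y, Finset.mem_insert_self y D⟩, fun z hzx hzS => ?_⟩
  rw [Finset.mem_insert, not_or] at hzS
  simpa using hagree z hzx hzS.1 hzS.2

end

/-- `fun(x) ≤ 1 + |N(x) ⊗ N(y)|`: the vertex `x` is a function of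
`{y} ∪ (N(x) ⊗ N(y))`, where `N(x) ⊗ N(y)` is the set of vertices other than
`x, y` adjacent to exactly one of `x` and `y`. -/
theorem stmt3 {V : Type*} [Fintype V] (G : SimpleGraph V) (x y : V) (hxy : x ≠ y) :
    FunctionOf G x
      (insert y (Finset.univ.filter fun z => z ≠ x ∧ z ≠ y ∧ ¬ (G.Adj x z ↔ G.Adj y z))) ∧
    VertexFunLE G x
      (1 + (Finset.univ.filter fun z => z ≠ x ∧ z ≠ y ∧ ¬ (G.Adj x z ↔ G.Adj y z)).card) := by
  set D := Finset.univ.filter fun z => z ≠ x ∧ z ≠ y ∧ ¬ (G.Adj x z ↔ G.Adj y z)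
  have hfun : FunctionOf G x (insert y D) :=
    functionOf_insert_of_adj_iff hxy (by simp [D]) fun z hzx hzy hzD => by
      simpa [D, hzx, hzy] using hzD
  exact ⟨hfun, hfun.vertexFunLE.mono ((Finset.card_insert_le y D).trans_eq (Nat.add_comm _ _))⟩
end

section
/- Every graph G of clique-width at most k with more than k vertices contains two distinct vertices x and y with |N(x) ⊗ N(y)| ≤ 2k - 2, where N(x) ⊗ N(y) is the set of vertices other than x,y adjacent to exactly one of x,y. -/
open scoped Classical

/-- `k`-expressions over a vertex type `V`: create a vertex with a label,
disjoint union, rename a label, or join two label classes completely. -/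
inductive CWExpr (V : Type*) (k : ℕ) : Type _ where
  | single : V → Fin k → CWExpr V k
  | union : CWExpr V k → CWExpr V k → CWExpr V k
  | relabel : Fin k → Fin k → CWExpr V k → CWExpr V k
  | join : Fin k → Fin k → CWExpr V k → CWExpr V k

namespace CWExpr

variable {V : Type*} [DecidableEq V] {k : ℕ}

/-- The set of vertices created by an expression. -/
def verts : CWExpr V k → Finset V
  | single v _ => {v}
  | union a b => verts a ∪ verts b
  | relabel _ _ a => verts a
  | join _ _ a => verts a

/-- The label of a vertex in the graph built by an expression. -/
def label : CWExpr V k → V → Fin k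
  | single _ i, _ => i
  | union a b, v => if v ∈ verts a then label a v else label b v
  | relabel i j a, v => if label a v = i then j else label a v
  | join _ _ a, v => label a v

/-- The adjacency relation of the graph built by an expression. -/
def adj : CWExpr V k → V → V → Prop
  | single _ _, _, _ => False
  | union a b, u, v => adj a u v ∨ adj b u v
  | relabel _ _ a, u, v => adj a u v
  | join i j a, u, v => adj a u v ∨
      (u ∈ verts a ∧ v ∈ verts a ∧ u ≠ v ∧
        ((label a u = i ∧ label a v = j) ∨ (label a u = j ∧ label a v = i)))

/-- Well-formedness: in a disjoint union the two parts use disjoint vertex sets,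
and a vertex is created only once. -/
def OK : CWExpr V k → Prop
  | single _ _ => True
  | union a b => OK a ∧ OK b ∧ Disjoint (verts a) (verts b)
  | relabel _ _ a => OK a
  | join _ _ a => OK a

end CWExpr

/-- `cwd(G) ≤ k`: the graph `G` can be built by a well-formed `k`-expression. -/
def CliqueWidthLE {V : Type*} [DecidableEq V] [Fintype V] (G : SimpleGraph V) (k : ℕ) : Prop :=
  ∃ e : CWExpr V k, e.OK ∧ e.verts = Finset.univ ∧ ∀ u v, G.Adj u v ↔ e.adj u v

/-!
Among the subexpressions of a `k`-expression for `G` there is one, `e₀`, building more than `k`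
but at most `2k` vertices: descend from the root, always into a union operand that still has more
than `k` vertices. By pigeonhole two vertices `x ≠ y` of `e₀` carry the same label there. Above
`e₀` the two are never separated again: every later relabelling treats them alike and every later
join adds the same edges at both. So every vertex outside `e₀` is adjacent to both or to neither,
and `N(x) ⊗ N(y)` lies in the at most `2k - 2` remaining vertices of `e₀`.
-/

namespace CWExpr

variable {V : Type*} [DecidableEq V] {k : ℕ}

inductive IsSubexpr : CWExpr V k → CWExpr V k → Prop
  | refl (e) : IsSubexpr e e
  | unionL {e a} (b) : IsSubexpr e a → IsSubexpr e (union a b)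
  | unionR {e b} (a) : IsSubexpr e b → IsSubexpr e (union a b)
  | relabel {e a} (i j : Fin k) : IsSubexpr e a → IsSubexpr e (relabel i j a)
  | join {e a} (i j : Fin k) : IsSubexpr e a → IsSubexpr e (join i j a)

theorem mem_verts_of_adj {e : CWExpr V k} {u v : V} (h : e.adj u v) :
    u ∈ e.verts ∧ v ∈ e.verts := by
  induction e with
  | single => exact h.elim
  | union a b iha ihb =>
    rcases h with h | h
    · exact (iha h).imp (Finset.mem_union_left _) (Finset.mem_union_left _)
    · exact (ihb h).imp (Finset.mem_union_right _) (Finset.mem_union_right _)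
  | relabel _ _ a iha => exact iha h
  | join _ _ a iha =>
    rcases h with h | ⟨hu, hv, -⟩
    · exact iha h
    · exact ⟨hu, hv⟩

theorem IsSubexpr.verts_subset {e₀ e : CWExpr V k} (h : IsSubexpr e₀ e) :
    e₀.verts ⊆ e.verts := by
  induction h with
  | refl => exact Finset.Subset.refl _
  | unionL _ _ ih => exact ih.trans Finset.subset_union_left
  | unionR _ _ ih => exact ih.trans Finset.subset_union_right
  | relabel _ _ _ ih => exact ih
  | join _ _ _ ih => exact ih

theorem IsSubexpr.label_eq {e₀ e : CWExpr V k} (h : IsSubexpr e₀ e) (hok : e.OK) {x y : V}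
    (hx : x ∈ e₀.verts) (hy : y ∈ e₀.verts) (hl : e₀.label x = e₀.label y) :
    e.label x = e.label y := by
  induction h with
  | refl => exact hl
  | unionL b hs ih =>
    simp only [label, if_pos (hs.verts_subset hx), if_pos (hs.verts_subset hy), ih hok.1]
  | @unionR b a hs ih =>
    have hxa : x ∉ a.verts := Finset.disjoint_right.mp hok.2.2 (hs.verts_subset hx)
    have hya : y ∉ a.verts := Finset.disjoint_right.mp hok.2.2 (hs.verts_subset hy)
    simp only [label, if_neg hxa, if_neg hya, ih hok.2.1]
  | relabel _ _ _ ih => simp only [label, ih hok]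
  | join _ _ _ ih => exact ih hok

theorem IsSubexpr.adj_iff_of_notMem {e₀ e : CWExpr V k} (h : IsSubexpr e₀ e) (hok : e.OK)
    {x y z : V} (hx : x ∈ e₀.verts) (hy : y ∈ e₀.verts) (hl : e₀.label x = e₀.label y)
    (hz : z ∉ e₀.verts) : e.adj x z ↔ e.adj y z := by
  induction h with
  | refl =>
    exact iff_of_false (fun h => hz (mem_verts_of_adj h).2) (fun h => hz (mem_verts_of_adj h).2)
  | @unionL a b hs ih =>
    have hxb : ¬ b.adj x z := fun h =>
      Finset.disjoint_left.mp hok.2.2 (hs.verts_subset hx) (mem_verts_of_adj h).1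
    have hyb : ¬ b.adj y z := fun h =>
      Finset.disjoint_left.mp hok.2.2 (hs.verts_subset hy) (mem_verts_of_adj h).1
    simp only [adj, or_iff_left hxb, or_iff_left hyb, ih hok.1]
  | @unionR b a hs ih =>
    have hxa : ¬ a.adj x z := fun h =>
      Finset.disjoint_right.mp hok.2.2 (hs.verts_subset hx) (mem_verts_of_adj h).1
    have hya : ¬ a.adj y z := fun h =>
      Finset.disjoint_right.mp hok.2.2 (hs.verts_subset hy) (mem_verts_of_adj h).1
    simp only [adj, or_iff_right hxa, or_iff_right hya, ih hok.2.1]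
  | relabel _ _ _ ih => exact ih hok
  | @join a i j hs ih =>
    have hla : a.label x = a.label y := hs.label_eq hok hx hy hl
    have hzx : x ≠ z := fun h => hz (h ▸ hx)
    have hzy : y ≠ z := fun h => hz (h ▸ hy)
    simp only [adj, ih hok, hla, hs.verts_subset hx, hs.verts_subset hy, ne_eq, hzx, hzy,
      not_false_eq_true, true_and]

theorem exists_isSubexpr_lt_card_verts_le {n : ℕ} (hn : 0 < n) (e : CWExpr V k)
    (he : n < e.verts.card) :
    ∃ e₀, IsSubexpr e₀ e ∧ n < e₀.verts.card ∧ e₀.verts.card ≤ 2 * n := by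
  induction e with
  | single =>
    simp only [verts, Finset.card_singleton] at he
    omega
  | union a b iha ihb =>
    by_cases ha : n < a.verts.card
    · obtain ⟨e₀, hs, h⟩ := iha ha
      exact ⟨e₀, hs.unionL b, h⟩
    by_cases hb : n < b.verts.card
    · obtain ⟨e₀, hs, h⟩ := ihb hb
      exact ⟨e₀, hs.unionR a, h⟩
    have := Finset.card_union_le a.verts b.verts
    exact ⟨union a b, .refl _, he, by simp only [verts]; omega⟩
  | relabel i j a iha =>
    obtain ⟨e₀, hs, h⟩ := iha he
    exact ⟨e₀, hs.relabel i j, h⟩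
  | join i j a iha =>
    obtain ⟨e₀, hs, h⟩ := iha he
    exact ⟨e₀, hs.join i j, h⟩

end CWExpr

open CWExpr in
/-- Every graph of clique-width at most `k` with more than `k` vertices contains two
distinct vertices `x`, `y` whose neighbourhood symmetric difference (excluding `x`
and `y` themselves) has size at most `2k - 2`. -/
theorem stmt7 {V : Type*} [DecidableEq V] [Fintype V] (G : SimpleGraph V) (k : ℕ)
    (hcw : CliqueWidthLE G k) (hcard : k < Fintype.card V) :
    ∃ x y : V, x ≠ y ∧
      (Finset.univ.filter fun z => z ≠ x ∧ z ≠ y ∧ ¬ (G.Adj x z ↔ G.Adj y z)).card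
        ≤ 2 * k - 2 := by
  obtain ⟨e, hok, hverts, hadj⟩ := hcw
  obtain ⟨v⟩ : Nonempty V := Fintype.card_pos_iff.mp (by omega)
  obtain ⟨e₀, hsub, hlt, hle⟩ := exists_isSubexpr_lt_card_verts_le (e.label v).pos e
    (by rwa [hverts, Finset.card_univ])
  obtain ⟨x, hx, y, hy, hxy, hl⟩ := Finset.exists_ne_map_eq_of_card_lt_of_maps_to
    (t := Finset.univ) (by simpa using hlt) (fun a _ => Finset.mem_univ (e₀.label a))
  refine ⟨x, y, hxy, ?_⟩
  have hdiff : (Finset.univ.filter fun z => z ≠ x ∧ z ≠ y ∧ ¬ (G.Adj x z ↔ G.Adj y z))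
      ⊆ e₀.verts \ {x, y} := by
    intro z hz
    simp only [Finset.mem_filter, Finset.mem_sdiff, Finset.mem_insert, Finset.mem_singleton,
      hadj] at hz ⊢
    exact ⟨by_contra fun hz₀ => hz.2.2.2 (hsub.adj_iff_of_notMem hok hx hy hl hz₀),
      by tauto⟩
  calc _ ≤ (e₀.verts \ {x, y}).card := Finset.card_le_card hdiff
    _ = e₀.verts.card - 2 := by
      rw [Finset.card_sdiff_of_subset (Finset.insert_subset hx (by simpa using hy)),
        Finset.card_pair hxy]
    _ ≤ 2 * k - 2 := by omega
end

section
/- Let G be a unit interval graph on n ≥ 2 vertices with no isolated vertices, represented by unit intervals I_1,...,I_n with distinct endpoints a_i < b_i = a_i + 1, ordered so that a_1 < a_2 < ... < a_n. Then the sum over i = 1,...,n−1 of |N(v_i) ⊗ N(v_{i+1})| is at most 2n − 3; consequently some consecutive pair v_t, v_{t+1} satisfies |N(v_t) ⊗ N(v_{t+1})| ≤ 1. -/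
/-!
Since the left endpoints increase, a vertex `z < i` separates `v i` from `v (i + 1)` exactly
when its right endpoint `a z + 1` lies in `[a i, a (i + 1))`, and a vertex `z > i + 1` exactly
when `a z - 1` lies in `(a i, a (i + 1)]`. These windows are disjoint for different `i`, so each
vertex `z ≤ n - 3` separates at most one consecutive pair lying above it, and each `z ≥ 2` at most
one lying below it: the sum is at most `2n - 4`, so its average over the `n - 1` pairs is below `2`.
-/

open scoped Classical

/-- In a unit interval representation, the adjacency relation: intervals
`[a i, a i + 1]` and `[a j, a j + 1]` intersect (and `i ≠ j`). -/
def UIAdj (a : ℕ → ℝ) (i j : ℕ) : Prop := i ≠ j ∧ |a i - a j| ≤ 1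

/-- The size of the symmetric difference of the neighbourhoods of `i` and `j`
(excluding `i` and `j`) among the vertices `0, …, n-1`. -/
noncomputable def UIsd (a : ℕ → ℝ) (n i j : ℕ) : ℕ :=
  ((Finset.range n).filter fun z => z ≠ i ∧ z ≠ j ∧ ¬ (UIAdj a z i ↔ UIAdj a z j)).card

open Finset

section

variable {a : ℕ → ℝ} {n i j : ℕ}

theorem UIAdj_comm : UIAdj a i j ↔ UIAdj a j i := by
  simp only [UIAdj, ne_comm, abs_sub_comm]

theorem UIAdj_iff_of_lt (h : a i < a j) : UIAdj a i j ↔ a j ≤ a i + 1 := by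
  rw [UIAdj, abs_sub_comm, abs_of_pos (sub_pos.2 h)]
  exact ⟨fun h' => by linarith [h'.2], fun h' => ⟨ne_of_apply_ne a h.ne, by linarith⟩⟩

theorem UIAdj_iff_of_gt (h : a j < a i) : UIAdj a i j ↔ a i ≤ a j + 1 :=
  UIAdj_comm.trans (UIAdj_iff_of_lt h)

noncomputable def lowerSymmDiff (a : ℕ → ℝ) (n i : ℕ) : Finset ℕ :=
  (range n).filter fun z => z < i ∧ a z + 1 ∈ Set.Ico (a i) (a (i + 1))

noncomputable def upperSymmDiff (a : ℕ → ℝ) (n i : ℕ) : Finset ℕ :=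
  (range n).filter fun z => i + 1 < z ∧ a z - 1 ∈ Set.Ioc (a i) (a (i + 1))

theorem separates_succ_iff (ha : StrictMonoOn a (Set.Iio n)) (hi : i + 1 < n) {z : ℕ}
    (hz : z < n) :
    (z ≠ i ∧ z ≠ i + 1 ∧ ¬(UIAdj a z i ↔ UIAdj a z (i + 1))) ↔
      (z < i ∧ a z + 1 ∈ Set.Ico (a i) (a (i + 1))) ∨
        (i + 1 < z ∧ a z - 1 ∈ Set.Ioc (a i) (a (i + 1))) := by
  have hlt {x y : ℕ} (hxy : x < y) (hy : y < n) : a x < a y :=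
    ha (Set.mem_Iio.2 (hxy.trans hy)) (Set.mem_Iio.2 hy) hxy
  have hi' := hlt (Nat.lt_succ_self i) hi
  rw [Set.mem_Ico, Set.mem_Ioc]
  obtain hzi | rfl | rfl | hzi : z < i ∨ z = i ∨ z = i + 1 ∨ i + 1 < z := by omega
  · rw [UIAdj_iff_of_lt (hlt hzi (by omega)), UIAdj_iff_of_lt (hlt (hzi.trans i.lt_succ_self) hi)]
    grind
  · grind
  · grind
  · rw [UIAdj_iff_of_gt (hlt (i.lt_succ_self.trans hzi) hz), UIAdj_iff_of_gt (hlt hzi hz)]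
    grind

theorem UIsd_succ_eq (ha : StrictMonoOn a (Set.Iio n)) (hi : i + 1 < n) :
    UIsd a n i (i + 1) = #(lowerSymmDiff a n i) + #(upperSymmDiff a n i) := by
  rw [UIsd, lowerSymmDiff, upperSymmDiff, ← card_union_of_disjoint, ← filter_or]
  · exact congrArg card (filter_congr fun z hz => separates_succ_iff ha hi (mem_range.1 hz))
  · exact disjoint_filter.2 fun z _ h₁ h₂ => by omega

theorem pairwiseDisjoint_lowerSymmDiff (ha : MonotoneOn a (Set.Iio n)) :
    (range (n - 1) : Set ℕ).PairwiseDisjoint (lowerSymmDiff a n) := by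
  intro x hx y hy hxy
  wlog h : x < y generalizing x y
  · exact (this hy hx hxy.symm (by omega)).symm
  have hy' : y < n - 1 := by simpa using hy
  have : a (x + 1) ≤ a y := ha (by simp; omega) (by simp; omega) h
  exact disjoint_filter.2 fun z _ hzx hzy => (hzx.2.2.trans_le this).not_ge hzy.2.1

theorem pairwiseDisjoint_upperSymmDiff (ha : MonotoneOn a (Set.Iio n)) :
    (range (n - 1) : Set ℕ).PairwiseDisjoint (upperSymmDiff a n) := by
  intro x hx y hy hxy
  wlog h : x < y generalizing x y
  · exact (this hy hx hxy.symm (by omega)).symm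
  have hy' : y < n - 1 := by simpa using hy
  have : a (x + 1) ≤ a y := ha (by simp; omega) (by simp; omega) h
  exact disjoint_filter.2 fun z _ hzx hzy => (hzx.2.2.trans this).not_gt hzy.2.1

theorem sum_card_lowerSymmDiff_le (ha : MonotoneOn a (Set.Iio n)) :
    ∑ i ∈ range (n - 1), #(lowerSymmDiff a n i) ≤ n - 2 := by
  rw [← card_biUnion (pairwiseDisjoint_lowerSymmDiff ha)]
  calc _ ≤ #(range (n - 2)) := card_le_card <| biUnion_subset.2 fun i hi z hz => by
          simp only [lowerSymmDiff, mem_filter, mem_range] at hi hz ⊢; omega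
    _ = n - 2 := card_range _

theorem sum_card_upperSymmDiff_le (ha : MonotoneOn a (Set.Iio n)) :
    ∑ i ∈ range (n - 1), #(upperSymmDiff a n i) ≤ n - 2 := by
  rw [← card_biUnion (pairwiseDisjoint_upperSymmDiff ha)]
  calc _ ≤ #(Ico 2 n) := card_le_card <| biUnion_subset.2 fun i hi z hz => by
          simp only [upperSymmDiff, mem_filter, mem_range, mem_Ico] at hi hz ⊢; omega
    _ = n - 2 := Nat.card_Ico _ _

theorem sum_UIsd_succ_le (ha : StrictMonoOn a (Set.Iio n)) :
    ∑ i ∈ range (n - 1), UIsd a n i (i + 1) ≤ 2 * (n - 2) := by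
  rw [sum_congr rfl fun i hi => UIsd_succ_eq ha (by simp at hi; omega), sum_add_distrib]
  have hlower := sum_card_lowerSymmDiff_le ha.monotoneOn
  have hupper := sum_card_upperSymmDiff_le ha.monotoneOn
  omega

end

theorem stmt10_general (n : ℕ) (hn : 2 ≤ n) (a : ℕ → ℝ)
    (hmono : ∀ i j, i < j → j < n → a i < a j) :
    (∑ i ∈ Finset.range (n - 1), UIsd a n i (i + 1)) ≤ 2 * n - 3 ∧
    ∃ t, t + 1 < n ∧ UIsd a n t (t + 1) ≤ 1 := by
  have hsum := sum_UIsd_succ_le fun i _ j hj hij => hmono i j hij hj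
  refine ⟨by omega, ?_⟩
  obtain ⟨t, ht, hlt⟩ := exists_lt_of_sum_lt (s := range (n - 1))
    (f := fun i => UIsd a n i (i + 1)) (g := fun _ => 2)
    (by simp only [sum_const, card_range, smul_eq_mul]; omega)
  exact ⟨t, by simp at ht; omega, by omega⟩

/-- For a unit interval graph on `n ≥ 2` vertices (intervals `[a i, a i + 1]`,
left endpoints increasing, all `2n` endpoints distinct) with no isolated vertices,
the sum of the neighbourhood symmetric differences of consecutive vertices is at
most `2n - 3`; consequently some consecutive pair `v t, v (t+1)` has symmetric
difference of size at most `1`. -/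
theorem stmt10 (n : ℕ) (hn : 2 ≤ n) (a : ℕ → ℝ)
    (hmono : ∀ i j, i < j → j < n → a i < a j)
    (hdist : ∀ i j, i < n → j < n → a i ≠ a j + 1)
    (hnoiso : ∀ i < n, ∃ j < n, UIAdj a i j) :
    (∑ i ∈ Finset.range (n - 1), UIsd a n i (i + 1)) ≤ 2 * n - 3 ∧
    ∃ t, t + 1 < n ∧ UIsd a n t (t + 1) ≤ 1 :=
  stmt10_general n hn a hmono
end

section
/- Every unit interval graph has functionality at most 2. -/
open scoped Classical

/-- `fun(G) ≤ k`: every (nonempty) induced subgraph of `G` has a vertex of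
functionality at most `k`. -/
def GraphFunLE {V : Type*} (G : SimpleGraph V) (k : ℕ) : Prop :=
  ∀ W : Set V, W.Nonempty → ∃ y : W, VertexFunLE (G.induce W) y k

lemma adjB_iff {V : Type*} (G : SimpleGraph V) (x z : V) :
    adjB G x z = true ↔ G.Adj x z := by
  unfold adjB; split <;> simp_all


/-- Finishing move: the pair (u,w) works when at most one vertex lies in (b u + 1, b w + 1]. -/
lemma keyfin {α : Type*} (b : α → ℝ) (u w : α) (h1 : b u < b w)
    (h3 : ∀ z, z ≠ u → z ≠ w → ¬(b u - 1 ≤ b z ∧ b z < b w - 1))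
    (d : α) (hd : ∀ z, b u + 1 < b z → b z ≤ b w + 1 → z = d) :
    ∃ u' w' d : α, u' ≠ w' ∧
      ∀ z, z ≠ u' → z ≠ w' → z ≠ d → (|b z - b u'| ≤ 1 ↔ |b z - b w'| ≤ 1) := by
  refine ⟨u, w, d, fun h => absurd (congrArg b h) (ne_of_lt h1), ?_⟩
  intro z hzu hzw hzd
  rw [abs_sub_le_iff, abs_sub_le_iff]
  constructor
  · rintro ⟨hl, hr⟩
    have hge : ¬ (b u - 1 ≤ b z ∧ b z < b w - 1) := h3 z hzu hzw
    push_neg at hge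
    exact ⟨by linarith, by linarith [hge (by linarith)]⟩
  · rintro ⟨hl, hr⟩
    refine ⟨?_, by linarith⟩
    by_contra hc
    push_neg at hc
    exact hzd (hd z (by linarith) (by linarith))

/-- Key combinatorial lemma on the real line. -/
lemma key {α : Type*} [Fintype α] (b : α → ℝ) (hinj : Function.Injective b) :
    ∀ n : ℕ, ∀ u w : α, b u < b w →
    (∀ z, ¬(b u < b z ∧ b z < b w)) →
    (∀ z, z ≠ u → z ≠ w → ¬(b u - 1 ≤ b z ∧ b z < b w - 1)) →
    (Finset.univ.filter (fun z => b u < b z)).card ≤ n →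
    ∃ u' w' d : α, u' ≠ w' ∧
      ∀ z, z ≠ u' → z ≠ w' → z ≠ d → (|b z - b u'| ≤ 1 ↔ |b z - b w'| ≤ 1) := by
  intro n
  induction n with
  | zero =>
    intro u w h1 h2 h3 hcard
    refine keyfin b u w h1 h3 u (fun z hz1 hz2 => ?_)
    exfalso
    have hm : z ∈ Finset.univ.filter (fun z => b u < b z) :=
      Finset.mem_filter.mpr ⟨Finset.mem_univ z, by linarith⟩
    have he : (Finset.univ.filter (fun z => b u < b z)) = ∅ :=
      Finset.card_eq_zero.mp (Nat.le_antisymm hcard (Nat.zero_le _))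
    rw [he] at hm
    exact Finset.notMem_empty z hm
  | succ n ih =>
    intro u w h1 h2 h3 hcard
    set R : Finset α := Finset.univ.filter (fun z => b u + 1 < b z ∧ b z ≤ b w + 1) with hRdef
    by_cases hR : R.card ≤ 1
    · by_cases hne : R.Nonempty
      · obtain ⟨d, hdR⟩ := hne
        refine keyfin b u w h1 h3 d (fun z hz1 hz2 => ?_)
        exact Finset.card_le_one.mp hR z
          (Finset.mem_filter.mpr ⟨Finset.mem_univ z, hz1, hz2⟩) d hdR
      · refine keyfin b u w h1 h3 u (fun z hz1 hz2 => ?_)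
        exfalso
        rw [Finset.not_nonempty_iff_eq_empty] at hne
        have hm : z ∈ R := Finset.mem_filter.mpr ⟨Finset.mem_univ z, hz1, hz2⟩
        rw [hne] at hm
        exact Finset.notMem_empty z hm
    · push_neg at hR
      have hRpos : R.Nonempty := Finset.card_pos.mp (by omega)
      obtain ⟨z1, hz1R, hz1min⟩ := Finset.exists_min_image R b hRpos
      have hR'pos : (R.erase z1).Nonempty := by
        rw [← Finset.card_pos, Finset.card_erase_of_mem hz1R]; omega
      obtain ⟨z2, hz2R', hz2min⟩ := Finset.exists_min_image (R.erase z1) b hR'pos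
      have hz2R : z2 ∈ R := Finset.mem_of_mem_erase hz2R'
      have hz12 : z1 ≠ z2 := fun h => (Finset.ne_of_mem_erase hz2R') h.symm
      obtain ⟨-, hz1a, hz1b⟩ := Finset.mem_filter.mp hz1R
      obtain ⟨-, hz2a, hz2b⟩ := Finset.mem_filter.mp hz2R
      have h1' : b z1 < b z2 :=
        lt_of_le_of_ne (hz1min z2 hz2R) (fun h => hz12 (hinj h))
      have h2' : ∀ z, ¬(b z1 < b z ∧ b z < b z2) := by
        rintro z ⟨ha, hb⟩
        have hzR : z ∈ R := Finset.mem_filter.mpr ⟨Finset.mem_univ z, by linarith, by linarith⟩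
        have hzne : z ≠ z1 := fun h => absurd (congrArg b h) (by push_neg; linarith)
        exact absurd (hz2min z (Finset.mem_erase.mpr ⟨hzne, hzR⟩)) (by push_neg; linarith)
      have h3' : ∀ z, z ≠ z1 → z ≠ z2 → ¬(b z1 - 1 ≤ b z ∧ b z < b z2 - 1) := by
        rintro z _ _ ⟨ha, hb⟩
        exact h2 z ⟨by linarith, by linarith⟩
      refine ih z1 z2 h1' h2' h3' ?_
      have hsub : Finset.univ.filter (fun z => b z1 < b z) ⊆
          (Finset.univ.filter (fun z => b u < b z)).erase z1 := by
        intro z hz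
        obtain ⟨-, hz⟩ := Finset.mem_filter.mp hz
        refine Finset.mem_erase.mpr ⟨fun h => absurd (congrArg b h) (by push_neg; linarith), ?_⟩
        exact Finset.mem_filter.mpr ⟨Finset.mem_univ z, by linarith⟩
      have hmem : z1 ∈ Finset.univ.filter (fun z => b u < b z) :=
        Finset.mem_filter.mpr ⟨Finset.mem_univ z1, by linarith⟩
      have := Finset.card_le_card hsub
      rw [Finset.card_erase_of_mem hmem] at this
      omega

/-- Every unit interval graph (the intersection graph of a family of unit-length
closed intervals on the real line) has functionality at most 2. -/
theorem stmt11 {V : Type*} [Fintype V] (G : SimpleGraph V)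
    (a : V → ℝ) (hrep : ∀ u v, G.Adj u v ↔ u ≠ v ∧ |a u - a v| ≤ 1) :
    GraphFunLE G 2 := by
  intro W hW
  haveI : Fintype ↥W := (Set.toFinite W).fintype
  obtain ⟨y0, hy0⟩ := hW
  have hadj : ∀ x z : ↥W, (G.induce W).Adj x z ↔ (x ≠ z ∧ |a ↑x - a ↑z| ≤ 1) := by
    intro x z
    rw [SimpleGraph.comap_adj, hrep]
    simp [Subtype.coe_ne_coe]
  by_cases htw : ∃ u v : ↥W, u ≠ v ∧ a ↑u = a ↑v
  · -- twins: v is a function of {u}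
    obtain ⟨u, v, huv, hav⟩ := htw
    have huS : u ∈ ({u} : Finset ↥W) := Finset.mem_singleton_self u
    refine ⟨v, {u}, by simp, ?_, fun g => g ⟨u, huS⟩, ?_⟩
    · simp [huv.symm]
    · intro z hzv hzS
      have hzu : z ≠ u := by simpa using hzS
      show (G.induce W).Adj v z ↔ adjB (G.induce W) u z = true
      rw [adjB_iff, hadj, hadj, hav]
      exact and_congr_left' ⟨fun _ => (Ne.symm hzu), fun _ => (Ne.symm hzv)⟩
  · push_neg at htw
    set b : ↥W → ℝ := fun z => a ↑z with hb
    have hinj : Function.Injective b := by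
      intro x y h
      by_contra hne
      exact htw x y hne h
    have huniv : (Finset.univ : Finset ↥W).Nonempty := ⟨⟨y0, hy0⟩, Finset.mem_univ _⟩
    obtain ⟨u, -, humin⟩ := Finset.exists_min_image Finset.univ b huniv
    by_cases herase : ((Finset.univ : Finset ↥W).erase u).Nonempty
    · obtain ⟨w, hwmem, hwmin⟩ := Finset.exists_min_image _ b herase
      have hwu : w ≠ u := Finset.ne_of_mem_erase hwmem
      have h1 : b u < b w :=
        lt_of_le_of_ne (humin w (Finset.mem_univ w)) (fun h => hwu (hinj h).symm)
      have h2 : ∀ z, ¬(b u < b z ∧ b z < b w) := by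
        rintro z ⟨ha, hc⟩
        have hzu : z ≠ u := fun h => absurd (congrArg b h) (by push_neg; linarith)
        exact absurd (hwmin z (Finset.mem_erase.mpr ⟨hzu, Finset.mem_univ z⟩))
          (by push_neg; linarith)
      have h3 : ∀ z, z ≠ u → z ≠ w → ¬(b u - 1 ≤ b z ∧ b z < b w - 1) := by
        rintro z hzu hzw ⟨ha, hc⟩
        exact absurd (hwmin z (Finset.mem_erase.mpr ⟨hzu, Finset.mem_univ z⟩))
          (by push_neg; linarith)
      obtain ⟨u', w', d, hne, hiff⟩ := key b hinj _ u w h1 h2 h3 le_rfl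
      set S : Finset ↥W := ({u', d} : Finset ↥W).erase w' with hS
      have hu'S : u' ∈ S := Finset.mem_erase.mpr ⟨hne, by simp⟩
      have hcard : S.card ≤ 2 := by
        calc S.card ≤ ({u', d} : Finset ↥W).card := Finset.card_erase_le
        _ ≤ ({d} : Finset ↥W).card + 1 := Finset.card_insert_le _ _
        _ ≤ 2 := by simp
      refine ⟨w', S, hcard, Finset.notMem_erase _ _, fun g => g ⟨u', hu'S⟩, ?_⟩
      intro z hzw hzS
      have hzu' : z ≠ u' := fun h => hzS (h ▸ hu'S)
      have hzd : z ≠ d := by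
        by_cases hdw : d = w'
        · rw [hdw]; exact hzw
        · have hdS : d ∈ S := Finset.mem_erase.mpr ⟨hdw, by simp⟩
          exact fun h => hzS (h ▸ hdS)
      have hiff' := hiff z hzu' hzw hzd
      show (G.induce W).Adj w' z ↔ adjB (G.induce W) u' z = true
      rw [adjB_iff, hadj, hadj]
      have habs : |a ↑w' - a ↑z| ≤ 1 ↔ |a ↑u' - a ↑z| ≤ 1 := by
        rw [abs_sub_comm (a ↑w'), abs_sub_comm (a ↑u')]
        exact hiff'.symm
      rw [habs]
      exact and_congr_left' ⟨fun _ => (Ne.symm hzu'), fun _ => (Ne.symm hzw)⟩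
    · -- W is a singleton {u}
      refine ⟨u, ∅, by simp, by simp, fun _ => false, ?_⟩
      intro z hzu _
      exfalso
      exact herase ⟨z, Finset.mem_erase.mpr ⟨hzu, Finset.mem_univ z⟩⟩
end

section
/- For every t ∈ ℕ there exists a permutation graph G with sd(G) ≥ t, where sd(G) = max over induced subgraphs H of min over pairs of distinct vertices x,y in H of |N_H(x) ⊗ N_H(y)|; in fact, for each t there is a permutation π on (t+1)^2 points such that for every pair of distinct vertices x, y of the permutation graph of π, at least t other vertices are adjacent to exactly one of x and y. -/
open scoped Classical

/-- Adjacency in the permutation graph of `π`: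
`i ∼ j` iff `(i - j)(π i - π j) < 0`. -/
def PermAdj {n : ℕ} (π : Equiv.Perm (Fin n)) (i j : Fin n) : Prop :=
  ((i.1 : ℤ) - (j.1 : ℤ)) * (((π i).1 : ℤ) - ((π j).1 : ℤ)) < 0

open Finset

def gridEquiv (t : ℕ) : Fin (t+1) × Fin (t+1) ≃ Fin ((t+1)^2) where
  toFun p := ⟨p.1.1 * (t+1) + p.2.1, by
    have h1 := p.1.2; have h2 := p.2.2
    have : (t+1)^2 = (t+1)*(t+1) := sq (t+1) ▸ rfl
    nlinarith⟩
  invFun k := (⟨k.1 / (t+1), by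
      have hk := k.2
      rw [Nat.div_lt_iff_lt_mul (Nat.succ_pos t)]
      calc k.1 < (t+1)^2 := hk
        _ = (t+1)*(t+1) := by ring⟩,
    ⟨k.1 % (t+1), Nat.mod_lt _ (Nat.succ_pos t)⟩)
  left_inv p := by
    ext
    · show (p.1.1 * (t+1) + p.2.1) / (t+1) = p.1.1
      rw [mul_comm, Nat.mul_add_div (Nat.succ_pos t), Nat.div_eq_of_lt p.2.2, Nat.add_zero]
    · show (p.1.1 * (t+1) + p.2.1) % (t+1) = p.2.1
      rw [mul_comm, Nat.mul_add_mod, Nat.mod_eq_of_lt p.2.2]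
  right_inv k := by
    apply Fin.ext
    show k.1 / (t+1) * (t+1) + k.1 % (t+1) = k.1
    rw [mul_comm]
    exact Nat.div_add_mod k.1 (t+1)

def pm (t : ℕ) : Equiv.Perm (Fin ((t+1)^2)) :=
  (gridEquiv t).symm.trans
    (((Equiv.prodComm (Fin (t+1)) (Fin (t+1))).trans
      ((Equiv.refl (Fin (t+1))).prodCongr Fin.revPerm)).trans (gridEquiv t))

lemma pm_apply (t : ℕ) (a b : Fin (t+1)) :
    pm t (gridEquiv t (a, b)) = gridEquiv t (b, a.rev) := by
  simp [pm]

lemma int_sign (n A B C D : ℤ) (hn : 1 ≤ n)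
    (hA0 : 0 ≤ A) (hA : A < n) (hB0 : 0 ≤ B) (hB : B < n)
    (hC0 : 0 ≤ C) (hC : C < n) (hD0 : 0 ≤ D) (hD : D < n) :
    ((A*n+B) - (C*n+D)) * ((B*n + (n-1-A)) - (D*n + (n-1-C))) < 0 ↔
      ((B = D ∧ A ≠ C) ∨ (B < D ∧ C < A) ∨ (D < B ∧ A < C)) := by
  rcases lt_trichotomy A C with h | h | h <;>
    rcases lt_trichotomy B D with h2 | h2 | h2
  · have k1 : (A-C)*n ≤ (-1)*n :=
      mul_le_mul_of_nonneg_right (by omega) (by omega)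
    have k2 : (B-D)*n ≤ (-1)*n :=
      mul_le_mul_of_nonneg_right (by omega) (by omega)
    have h1 : (A*n+B) - (C*n+D) < 0 := by nlinarith
    have h3 : (B*n + (n-1-A)) - (D*n + (n-1-C)) < 0 := by nlinarith
    exact iff_of_false (not_lt.mpr (le_of_lt (mul_pos_of_neg_of_neg h1 h3))) (by omega)
  · have k1 : (A-C)*n ≤ (-1)*n :=
      mul_le_mul_of_nonneg_right (by omega) (by omega)
    have h1 : (A*n+B) - (C*n+D) < 0 := by nlinarith
    have h3 : 0 < (B*n + (n-1-A)) - (D*n + (n-1-C)) := by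
      have : B*n = D*n := by rw [h2]
      nlinarith
    exact iff_of_true (mul_neg_of_neg_of_pos h1 h3) (by omega)
  · have k1 : (A-C)*n ≤ (-1)*n :=
      mul_le_mul_of_nonneg_right (by omega) (by omega)
    have k2 : (1:ℤ)*n ≤ (B-D)*n :=
      mul_le_mul_of_nonneg_right (by omega) (by omega)
    have h1 : (A*n+B) - (C*n+D) < 0 := by nlinarith
    have h3 : 0 < (B*n + (n-1-A)) - (D*n + (n-1-C)) := by nlinarith
    exact iff_of_true (mul_neg_of_neg_of_pos h1 h3) (by omega)
  · have k2 : (B-D)*n ≤ (-1)*n :=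
      mul_le_mul_of_nonneg_right (by omega) (by omega)
    have h1 : (A*n+B) - (C*n+D) < 0 := by
      have : A*n = C*n := by rw [h]
      nlinarith
    have h3 : (B*n + (n-1-A)) - (D*n + (n-1-C)) < 0 := by
      have : A*n = C*n := by rw [h]
      nlinarith
    exact iff_of_false (not_lt.mpr (le_of_lt (mul_pos_of_neg_of_neg h1 h3))) (by omega)
  · subst h; subst h2
    exact iff_of_false (by simp) (by omega)
  · have k2 : (1:ℤ)*n ≤ (B-D)*n :=
      mul_le_mul_of_nonneg_right (by omega) (by omega)
    have h1 : 0 < (A*n+B) - (C*n+D) := by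
      have : A*n = C*n := by rw [h]
      nlinarith
    have h3 : 0 < (B*n + (n-1-A)) - (D*n + (n-1-C)) := by
      have : A*n = C*n := by rw [h]
      nlinarith
    exact iff_of_false (not_lt.mpr (le_of_lt (mul_pos h1 h3))) (by omega)
  · have k1 : (1:ℤ)*n ≤ (A-C)*n :=
      mul_le_mul_of_nonneg_right (by omega) (by omega)
    have k2 : (B-D)*n ≤ (-1)*n :=
      mul_le_mul_of_nonneg_right (by omega) (by omega)
    have h1 : 0 < (A*n+B) - (C*n+D) := by nlinarith
    have h3 : (B*n + (n-1-A)) - (D*n + (n-1-C)) < 0 := by nlinarith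
    exact iff_of_true (mul_neg_of_pos_of_neg h1 h3) (by omega)
  · have k1 : (1:ℤ)*n ≤ (A-C)*n :=
      mul_le_mul_of_nonneg_right (by omega) (by omega)
    have h1 : 0 < (A*n+B) - (C*n+D) := by
      have : B*n = D*n := by rw [h2]
      nlinarith
    have h3 : (B*n + (n-1-A)) - (D*n + (n-1-C)) < 0 := by
      have : B*n = D*n := by rw [h2]
      nlinarith
    exact iff_of_true (mul_neg_of_pos_of_neg h1 h3) (by omega)
  · have k1 : (1:ℤ)*n ≤ (A-C)*n :=
      mul_le_mul_of_nonneg_right (by omega) (by omega)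
    have k2 : (1:ℤ)*n ≤ (B-D)*n :=
      mul_le_mul_of_nonneg_right (by omega) (by omega)
    have h1 : 0 < (A*n+B) - (C*n+D) := by nlinarith
    have h3 : 0 < (B*n + (n-1-A)) - (D*n + (n-1-C)) := by nlinarith
    exact iff_of_false (not_lt.mpr (le_of_lt (mul_pos h1 h3))) (by omega)
open scoped Classical
open Finset

lemma adj_iff (t : ℕ) (a b c d : Fin (t+1)) :
    PermAdj (pm t) (gridEquiv t (a, b)) (gridEquiv t (c, d)) ↔
      ((b.1 = d.1 ∧ a.1 ≠ c.1) ∨ (b.1 < d.1 ∧ c.1 < a.1) ∨ (d.1 < b.1 ∧ a.1 < c.1)) := by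
  have ha := a.isLt; have hb := b.isLt; have hc := c.isLt; have hd := d.isLt
  unfold PermAdj
  rw [pm_apply, pm_apply]
  have e1 : ∀ u v : Fin (t+1), ((gridEquiv t (u, v)).1 : ℤ) = (u.1 : ℤ) * (t+1) + v.1 := by
    intro u v
    show ((u.1 * (t+1) + v.1 : ℕ) : ℤ) = _
    push_cast; ring
  have e2 : ∀ u : Fin (t+1), ((u.rev.1 : ℕ) : ℤ) = ((t:ℤ)+1) - 1 - u.1 := by
    intro u
    rw [Fin.val_rev]
    have := u.isLt
    push_cast [Nat.cast_sub (show u.1 ≤ t by omega)]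
    ring
  have e3 : ∀ u v : Fin (t+1), ((gridEquiv t (u, v.rev)).1 : ℤ)
      = (u.1 : ℤ) * (t+1) + (((t:ℤ)+1) - 1 - v.1) := by
    intro u v
    show ((u.1 * (t+1) + v.rev.1 : ℕ) : ℤ) = _
    push_cast [Fin.val_rev, Nat.cast_sub (show v.1 ≤ t by omega)]
    ring
  rw [e1 a b, e1 c d, e3 b a, e3 d c]
  have hiff := int_sign ((t:ℤ)+1) a.1 b.1 c.1 d.1 (by omega)
    (by omega) (by omega) (by omega) (by omega) (by omega) (by omega) (by omega) (by omega)
  constructor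
  · intro hlt
    have : ((a.1:ℤ)*((t:ℤ)+1)+b.1 - ((c.1:ℤ)*((t:ℤ)+1)+d.1)) *
        ((b.1:ℤ)*((t:ℤ)+1) + (((t:ℤ)+1)-1-a.1) - ((d.1:ℤ)*((t:ℤ)+1) + (((t:ℤ)+1)-1-c.1))) < 0 := by
      convert hlt using 2 <;> push_cast <;> ring
    have := hiff.mp this
    omega
  · intro hr
    have h0 := hiff.mpr (by omega)
    convert h0 using 2 <;> push_cast <;> ring
lemma two_fam (t : ℕ) (S : Finset (Fin ((t+1)^2))) (s₁ s₂ : Finset (Fin (t+1)))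
    (g₁ g₂ : Fin (t+1) → Fin ((t+1)^2))
    (hg₁ : Function.Injective g₁) (hg₂ : Function.Injective g₂)
    (hdisj : ∀ u ∈ s₁, ∀ v ∈ s₂, g₁ u ≠ g₂ v)
    (h₁ : ∀ u ∈ s₁, g₁ u ∈ S) (h₂ : ∀ v ∈ s₂, g₂ v ∈ S)
    (hcard : t ≤ s₁.card + s₂.card) : t ≤ S.card := by
  have hd : Disjoint (s₁.image g₁) (s₂.image g₂) := by
    rw [Finset.disjoint_left]
    intro x hx1 hx2
    obtain ⟨u, hu, rfl⟩ := Finset.mem_image.mp hx1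
    obtain ⟨v, hv, hvEq⟩ := Finset.mem_image.mp hx2
    exact hdisj u hu v hv hvEq.symm
  calc t ≤ s₁.card + s₂.card := hcard
    _ = (s₁.image g₁).card + (s₂.image g₂).card := by
        rw [Finset.card_image_of_injective _ hg₁, Finset.card_image_of_injective _ hg₂]
    _ = ((s₁.image g₁) ∪ (s₂.image g₂)).card := (Finset.card_union_of_disjoint hd).symm
    _ ≤ S.card := by
        apply Finset.card_le_card
        intro x hx
        rcases Finset.mem_union.mp hx with hx | hx
        · obtain ⟨u, hu, rfl⟩ := Finset.mem_image.mp hx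
          exact h₁ u hu
        · obtain ⟨v, hv, rfl⟩ := Finset.mem_image.mp hx
          exact h₂ v hv

lemma ginj (t : ℕ) {p q : Fin (t+1) × Fin (t+1)} (h : gridEquiv t p = gridEquiv t q) :
    p = q := (gridEquiv t).injective h

lemma key_s13 (t : ℕ) (a b c d : Fin (t+1)) (h : b < d ∨ (b = d ∧ a < c)) :
    t ≤ (Finset.univ.filter fun z =>
          z ≠ gridEquiv t (a, b) ∧ z ≠ gridEquiv t (c, d) ∧
            ¬ (PermAdj (pm t) (gridEquiv t (a, b)) z ↔
               PermAdj (pm t) (gridEquiv t (c, d)) z)).card := by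
  have ha := a.isLt; have hb := b.isLt; have hc := c.isLt; have hd := d.isLt
  rcases h with hbd | ⟨hbd, hac⟩
  · -- b < d
    have hbd' : b.1 < d.1 := hbd
    rcases lt_trichotomy a c with hac | hac | hac
    · -- a < c : rows b and d
      have hac' : a.1 < c.1 := hac
      apply two_fam t _ (Finset.Iic c \ {a}) (Finset.Ici a \ {c})
        (fun e' => gridEquiv t (e', b)) (fun e' => gridEquiv t (e', d))
      · intro u v huv; simpa using ginj t huv
      · intro u v huv; simpa using ginj t huv
      · intro u _ v _ hEq
        have := ginj t hEq
        simp only [Prod.mk.injEq] at this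
        exact absurd this.2 (by simp [Fin.ext_iff]; omega)
      · intro u hu
        simp only [Finset.mem_sdiff, Finset.mem_Iic, Finset.mem_singleton] at hu
        have hu1 : u.1 ≤ c.1 := hu.1
        have hu2 : u.1 ≠ a.1 := fun hh => hu.2 (Fin.ext hh)
        rw [Finset.mem_filter]
        refine ⟨Finset.mem_univ _, ?_, ?_, ?_⟩
        · intro hEq; have := ginj t hEq
          simp only [Prod.mk.injEq, Fin.ext_iff] at this; omega
        · intro hEq; have := ginj t hEq
          simp only [Prod.mk.injEq, Fin.ext_iff] at this; omega
        · rw [adj_iff, adj_iff]; omega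
      · intro u hu
        simp only [Finset.mem_sdiff, Finset.mem_Ici, Finset.mem_singleton] at hu
        have hu1 : a.1 ≤ u.1 := hu.1
        have hu2 : u.1 ≠ c.1 := fun hh => hu.2 (Fin.ext hh)
        rw [Finset.mem_filter]
        refine ⟨Finset.mem_univ _, ?_, ?_, ?_⟩
        · intro hEq; have := ginj t hEq
          simp only [Prod.mk.injEq, Fin.ext_iff] at this; omega
        · intro hEq; have := ginj t hEq
          simp only [Prod.mk.injEq, Fin.ext_iff] at this; omega
        · rw [adj_iff, adj_iff]; omega
      · rw [Finset.card_sdiff_of_subset (Finset.singleton_subset_iff.mpr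
              (Finset.mem_Iic.mpr (le_of_lt hac))),
            Finset.card_sdiff_of_subset (Finset.singleton_subset_iff.mpr
              (Finset.mem_Ici.mpr (le_of_lt hac))),
            Fin.card_Iic, Fin.card_Ici, Finset.card_singleton, Finset.card_singleton]
        omega
    · -- a = c : rows b and d, columns below/above a
      subst hac
      apply two_fam t _ (Finset.Iio a) (Finset.Ioi a)
        (fun e' => gridEquiv t (e', b)) (fun e' => gridEquiv t (e', d))
      · intro u v huv; simpa using ginj t huv
      · intro u v huv; simpa using ginj t huv
      · intro u _ v _ hEq
        have := ginj t hEq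
        simp only [Prod.mk.injEq] at this
        exact absurd this.2 (by simp [Fin.ext_iff]; omega)
      · intro u hu
        have hu1 : u.1 < a.1 := Fin.lt_def.mp (Finset.mem_Iio.mp hu)
        rw [Finset.mem_filter]
        refine ⟨Finset.mem_univ _, ?_, ?_, ?_⟩
        · intro hEq; have := ginj t hEq
          simp only [Prod.mk.injEq, Fin.ext_iff] at this; omega
        · intro hEq; have := ginj t hEq
          simp only [Prod.mk.injEq, Fin.ext_iff] at this; omega
        · rw [adj_iff, adj_iff]; omega
      · intro u hu
        have hu1 : a.1 < u.1 := Fin.lt_def.mp (Finset.mem_Ioi.mp hu)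
        rw [Finset.mem_filter]
        refine ⟨Finset.mem_univ _, ?_, ?_, ?_⟩
        · intro hEq; have := ginj t hEq
          simp only [Prod.mk.injEq, Fin.ext_iff] at this; omega
        · intro hEq; have := ginj t hEq
          simp only [Prod.mk.injEq, Fin.ext_iff] at this; omega
        · rw [adj_iff, adj_iff]; omega
      · rw [Fin.card_Iio, Fin.card_Ioi]; omega
    · -- c < a : columns a and c
      have hac' : c.1 < a.1 := hac
      apply two_fam t _ (Finset.Iic d \ {b}) (Finset.Ici b \ {d})
        (fun f => gridEquiv t (a, f)) (fun f => gridEquiv t (c, f))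
      · intro u v huv; simpa using ginj t huv
      · intro u v huv; simpa using ginj t huv
      · intro u _ v _ hEq
        have := ginj t hEq
        simp only [Prod.mk.injEq] at this
        exact absurd this.1 (by simp [Fin.ext_iff]; omega)
      · intro u hu
        simp only [Finset.mem_sdiff, Finset.mem_Iic, Finset.mem_singleton] at hu
        have hu1 : u.1 ≤ d.1 := hu.1
        have hu2 : u.1 ≠ b.1 := fun hh => hu.2 (Fin.ext hh)
        rw [Finset.mem_filter]
        refine ⟨Finset.mem_univ _, ?_, ?_, ?_⟩
        · intro hEq; have := ginj t hEq
          simp only [Prod.mk.injEq, Fin.ext_iff] at this; omega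
        · intro hEq; have := ginj t hEq
          simp only [Prod.mk.injEq, Fin.ext_iff] at this; omega
        · rw [adj_iff, adj_iff]; omega
      · intro u hu
        simp only [Finset.mem_sdiff, Finset.mem_Ici, Finset.mem_singleton] at hu
        have hu1 : b.1 ≤ u.1 := hu.1
        have hu2 : u.1 ≠ d.1 := fun hh => hu.2 (Fin.ext hh)
        rw [Finset.mem_filter]
        refine ⟨Finset.mem_univ _, ?_, ?_, ?_⟩
        · intro hEq; have := ginj t hEq
          simp only [Prod.mk.injEq, Fin.ext_iff] at this; omega
        · intro hEq; have := ginj t hEq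
          simp only [Prod.mk.injEq, Fin.ext_iff] at this; omega
        · rw [adj_iff, adj_iff]; omega
      · rw [Finset.card_sdiff_of_subset (Finset.singleton_subset_iff.mpr
              (Finset.mem_Iic.mpr (le_of_lt hbd))),
            Finset.card_sdiff_of_subset (Finset.singleton_subset_iff.mpr
              (Finset.mem_Ici.mpr (le_of_lt hbd))),
            Fin.card_Iic, Fin.card_Ici, Finset.card_singleton, Finset.card_singleton]
        omega
  · -- b = d, a < c : rows above/below b
    subst hbd
    have hac' : a.1 < c.1 := hac
    apply two_fam t _ (Finset.Ioi b) (Finset.Iio b)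
      (fun f => gridEquiv t (a, f)) (fun f => gridEquiv t (c, f))
    · intro u v huv; simpa using ginj t huv
    · intro u v huv; simpa using ginj t huv
    · intro u _ v _ hEq
      have := ginj t hEq
      simp only [Prod.mk.injEq] at this
      exact absurd this.1 (by simp [Fin.ext_iff]; omega)
    · intro u hu
      have hu1 : b.1 < u.1 := Fin.lt_def.mp (Finset.mem_Ioi.mp hu)
      rw [Finset.mem_filter]
      refine ⟨Finset.mem_univ _, ?_, ?_, ?_⟩
      · intro hEq; have := ginj t hEq
        simp only [Prod.mk.injEq, Fin.ext_iff] at this; omega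
      · intro hEq; have := ginj t hEq
        simp only [Prod.mk.injEq, Fin.ext_iff] at this; omega
      · rw [adj_iff, adj_iff]; omega
    · intro u hu
      have hu1 : u.1 < b.1 := Fin.lt_def.mp (Finset.mem_Iio.mp hu)
      rw [Finset.mem_filter]
      refine ⟨Finset.mem_univ _, ?_, ?_, ?_⟩
      · intro hEq; have := ginj t hEq
        simp only [Prod.mk.injEq, Fin.ext_iff] at this; omega
      · intro hEq; have := ginj t hEq
        simp only [Prod.mk.injEq, Fin.ext_iff] at this; omega
      · rw [adj_iff, adj_iff]; omega
    · rw [Fin.card_Ioi, Fin.card_Iio]; omega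

/-- For every `t` there is a permutation `π` on `(t+1)^2` points such that in the
permutation graph of `π`, every pair of distinct vertices `x, y` has at least `t`
other vertices adjacent to exactly one of `x` and `y`. In particular there is a
permutation graph `G` with `sd(G) ≥ t`. -/
theorem stmt13 (t : ℕ) :
    ∃ π : Equiv.Perm (Fin ((t + 1) ^ 2)),
      ∀ x y : Fin ((t + 1) ^ 2), x ≠ y →
        t ≤ (Finset.univ.filter fun z =>
              z ≠ x ∧ z ≠ y ∧ ¬ (PermAdj π x z ↔ PermAdj π y z)).card := by
  refine ⟨pm t, ?_⟩
  intro x y hxy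
  obtain ⟨⟨a, b⟩, rfl⟩ : ∃ p, x = gridEquiv t p :=
    ⟨_, ((gridEquiv t).apply_symm_apply x).symm⟩
  obtain ⟨⟨c, d⟩, rfl⟩ : ∃ p, y = gridEquiv t p :=
    ⟨_, ((gridEquiv t).apply_symm_apply y).symm⟩
  have hne : ¬(a.1 = c.1 ∧ b.1 = d.1) := by
    rintro ⟨h1, h2⟩
    exact hxy (congrArg _ (Prod.ext (Fin.ext h1) (Fin.ext h2)))
  by_cases h : b < d ∨ (b = d ∧ a < c)
  · exact key_s13 t a b c d h
  · have h' : d < b ∨ (d = b ∧ c < a) := by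
      simp only [Fin.lt_def, Fin.ext_iff, not_or, not_and, not_lt] at h ⊢
      omega
    calc t ≤ _ := key_s13 t c d a b h'
      _ = _ := by
        apply congrArg Finset.card
        apply Finset.filter_congr
        intro z _
        constructor
        · rintro ⟨h1, h2, h3⟩; exact ⟨h2, h1, fun hh => h3 hh.symm⟩
        · rintro ⟨h1, h2, h3⟩; exact ⟨h2, h1, fun hh => h3 hh.symm⟩
end

section
/- Let G be a graph and H = L(G) its line graph. Then every vertex of H has functionality at most 6 in H; consequently, since the class of line graphs is hereditary, fun(L(G)) ≤ 6 for every graph G. -/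
open scoped Classical

/-! An edge `x = s(a, b)` of `G` meets an edge `z ≠ x` iff `a ∈ z` or `b ∈ z`. Fix three edges
`Y` through `a` other than `x`, or all of them if there are fewer. An edge `z ∉ Y` avoiding `a`
meets at most two edges through `a`, so `a ∈ z` iff `Y` has three members and `z` meets all of
them. Doing the same at `b` yields at most six vertices of `L(G)` that determine adjacency to `x`.
Only adjacencies between edges are used, so the argument applies to every graph that embeds
into `L(G)` as an induced subgraph, which gives the hereditary statement. -/

open Finset

theorem Sym2.card_le_two_of_forall_mem_and_meet {V : Type*} {a : V} {f : Sym2 V} (ha : a ∉ f)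
    {Y : Finset (Sym2 V)} (hY : ∀ y ∈ Y, a ∈ y ∧ ∃ w ∈ y, w ∈ f) : #Y ≤ 2 := by
  induction f using Sym2.ind with
  | _ c d =>
  have hsub : Y ⊆ {s(a, c), s(a, d)} := by
    intro y hy
    obtain ⟨hay, w, hwy, hwf⟩ := hY y hy
    have hy : y = s(a, w) :=
      (Sym2.mem_and_mem_iff (ne_of_mem_of_not_mem hwf ha).symm).1 ⟨hay, hwy⟩
    rcases Sym2.mem_iff.1 hwf with rfl | rfl <;> simp [hy]
  exact (card_le_card hsub).trans card_le_two

theorem Set.exists_finset_subset_card_le_and_eq_or_eq {α : Type*} (A : Set α) (n : ℕ) :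
    ∃ Y : Finset α, ↑Y ⊆ A ∧ #Y ≤ n ∧ (#Y = n ∨ ↑Y = A) := by
  rcases A.finite_or_infinite with hA | hA
  · obtain ⟨Y, hYA, hY⟩ := Finset.exists_subset_card_eq (min_le_right n #hA.toFinset)
    refine ⟨Y, by simpa using hYA, hY ▸ min_le_left _ _, ?_⟩
    rcases min_choice n #hA.toFinset with h | h
    · exact .inl (hY.trans h)
    · exact .inr (by rw [Finset.eq_of_subset_of_card_le hYA (hY.trans h).ge, Finite.coe_toFinset])
  · obtain ⟨Y, hYA, hY⟩ := hA.exists_subset_card_eq n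
    exact ⟨Y, hYA, hY.le, .inl hY⟩

theorem functionOf_of_forall_iff {α : Type*} {H : SimpleGraph α} {x : α} {S : Finset α}
    (hx : x ∉ S) (P : (S → Bool) → Prop)
    (hP : ∀ z, z ≠ x → z ∉ S → (H.Adj x z ↔ P fun s => adjB H s.1 z)) : FunctionOf H x S :=
  ⟨hx, fun g => decide (P g), fun z hzx hzS => by simpa using hP z hzx hzS⟩

namespace SimpleGraph.Embedding

variable {V α : Type*} {G : SimpleGraph V} {H : SimpleGraph α}

def otherEdgesAt (φ : H ↪g G.lineGraph) (x : α) (a : V) : Set α :=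
  {u | u ≠ x ∧ a ∈ (φ u : Sym2 V)}

theorem adj_iff_exists_mem (φ : H ↪g G.lineGraph) {u v : α} :
    H.Adj u v ↔ u ≠ v ∧ ∃ w, w ∈ (φ u : Sym2 V) ∧ w ∈ (φ v : Sym2 V) := by
  rw [← φ.map_adj_iff, lineGraph_adj_iff_exists, φ.injective.ne_iff]

theorem adj_iff_mem_or_mem (φ : H ↪g G.lineGraph) {x z : α} {a b : V}
    (hx : (φ x : Sym2 V) = s(a, b)) (hzx : z ≠ x) :
    H.Adj x z ↔ a ∈ (φ z : Sym2 V) ∨ b ∈ (φ z : Sym2 V) := by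
  simp [φ.adj_iff_exists_mem, hx, hzx.symm]

theorem mem_iff_card_eq_three_and_forall_adj (φ : H ↪g G.lineGraph) {a : V} {x z : α}
    {Y : Finset α} (hYsub : ↑Y ⊆ otherEdgesAt φ x a) (hY : #Y = 3 ∨ ↑Y = otherEdgesAt φ x a)
    (hzx : z ≠ x) (hzY : z ∉ Y) :
    a ∈ (φ z : Sym2 V) ↔ #Y = 3 ∧ ∀ y ∈ Y, H.Adj y z := by
  constructor
  · intro haz
    have h3 : #Y = 3 := hY.resolve_right fun h => hzY (by rw [← mem_coe, h]; exact ⟨hzx, haz⟩)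
    exact ⟨h3, fun y hy =>
      φ.adj_iff_exists_mem.2 ⟨ne_of_mem_of_not_mem hy hzY, a, (hYsub hy).2, haz⟩⟩
  · rintro ⟨h3, hadj⟩
    by_contra haz
    have := Sym2.card_le_two_of_forall_mem_and_meet haz (Y := Y.image fun u => (φ u : Sym2 V)) ?_
    · rw [card_image_of_injective _ fun _ _ h => φ.injective (Subtype.ext h)] at this
      omega
    simp only [mem_image, forall_exists_index, and_imp, forall_apply_eq_imp_iff₂]
    exact fun y hy => ⟨(hYsub hy).2, (φ.adj_iff_exists_mem.1 (hadj y hy)).2⟩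

theorem vertexFunLE_six (φ : H ↪g G.lineGraph) (x : α) : VertexFunLE H x 6 := by
  obtain ⟨⟨a, b⟩, hab⟩ := Sym2.mk_surjective (φ x : Sym2 V)
  obtain ⟨Y, hYsub, hYcard, hY⟩ :=
    (otherEdgesAt φ x a).exists_finset_subset_card_le_and_eq_or_eq 3
  obtain ⟨Z, hZsub, hZcard, hZ⟩ :=
    (otherEdgesAt φ x b).exists_finset_subset_card_le_and_eq_or_eq 3
  have hxS : x ∉ Y ∪ Z := by
    rw [mem_union, not_or]
    exact ⟨fun h => (hYsub h).1 rfl, fun h => (hZsub h).1 rfl⟩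
  refine ⟨Y ∪ Z, (card_union_le _ _).trans (by omega), functionOf_of_forall_iff hxS
    (fun g => (#Y = 3 ∧ ∀ y (hy : y ∈ Y), g ⟨y, mem_union_left Z hy⟩) ∨
      (#Z = 3 ∧ ∀ y (hy : y ∈ Z), g ⟨y, mem_union_right Y hy⟩))
    fun z hzx hzS => ?_⟩
  rw [mem_union, not_or] at hzS
  rw [φ.adj_iff_mem_or_mem hab.symm hzx,
    φ.mem_iff_card_eq_three_and_forall_adj hYsub hY hzx hzS.1,
    φ.mem_iff_card_eq_three_and_forall_adj hZsub hZ hzx hzS.2]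
  simp [adjB]

end SimpleGraph.Embedding

theorem stmt14_general {V : Type*} (G : SimpleGraph V) :
    (∀ x : G.edgeSet, VertexFunLE G.lineGraph x 6) ∧ GraphFunLE G.lineGraph 6 :=
  ⟨SimpleGraph.Embedding.refl.vertexFunLE_six,
    fun W ⟨y, hy⟩ => ⟨⟨y, hy⟩, (SimpleGraph.Embedding.induce W).vertexFunLE_six _⟩⟩

/-- Every vertex of the line graph `L(G)` has functionality at most 6 in `L(G)`;
consequently (the class of line graphs being hereditary) `fun(L(G)) ≤ 6`. -/
theorem stmt14 {V : Type*} [Fintype V] [DecidableEq V] (G : SimpleGraph V)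
    [DecidableRel G.Adj] :
    (∀ x : G.edgeSet, VertexFunLE G.lineGraph x 6) ∧ GraphFunLE G.lineGraph 6 :=
  stmt14_general G
end

section
/- Let x = ab be an edge of a graph G where deg(a) ≥ 4 and deg(b) ≥ 4. Let y_1, y_2, y_3 be three edges incident to a other than x, and z_1, z_2, z_3 be three edges incident to b other than x. Then for any edge v of G not in {x, y_1, y_2, y_3, z_1, z_2, z_3}: v shares an endpoint with x if and only if (v shares an endpoint with each of y_1, y_2, y_3) or (v shares an endpoint with each of z_1, z_2, z_3). -/
lemma sym2_three_mem {α : Type*} {x y z : α} {s : Sym2 α}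
    (hx : x ∈ s) (hy : y ∈ s) (hz : z ∈ s)
    (hxy : x ≠ y) (hxz : x ≠ z) (hyz : y ≠ z) : False := by
  have h := (Sym2.mem_and_mem_iff hxy).mp ⟨hx, hy⟩
  subst h
  rcases Sym2.mem_iff.mp hz with rfl | rfl
  · exact hxz rfl
  · exact hyz rfl

lemma edges_through_common_vertex {α : Type*} {c : α} {e : Fin 3 → Sym2 α}
    (he : ∀ i, c ∈ e i) (hinj : Function.Injective e) {v : Sym2 α}
    (hcv : c ∉ v) (h : ∀ i, ∃ w, w ∈ v ∧ w ∈ e i) : False := by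
  have hmem : ∀ i, (Sym2.Mem.other (he i)) ∈ v := by
    intro i
    obtain ⟨w, hwv, hwe⟩ := h i
    rw [← Sym2.other_spec (he i), Sym2.mem_iff] at hwe
    rcases hwe with rfl | rfl
    · exact absurd hwv hcv
    · exact hwv
  have hoinj : ∀ i j, Sym2.Mem.other (he i) = Sym2.Mem.other (he j) → i = j := by
    intro i j hij
    apply hinj
    rw [← Sym2.other_spec (he i), ← Sym2.other_spec (he j), hij]
  exact sym2_three_mem (hmem 0) (hmem 1) (hmem 2)
    (fun h0 => by exact absurd (hoinj 0 1 h0) (by decide))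
    (fun h0 => by exact absurd (hoinj 0 2 h0) (by decide))
    (fun h0 => by exact absurd (hoinj 1 2 h0) (by decide))

/-- Let `x = ab` be an edge of `G` where `deg a ≥ 4` and `deg b ≥ 4`, let
`y 0, y 1, y 2` be three distinct edges incident to `a` other than `x`, and
`z 0, z 1, z 2` three distinct edges incident to `b` other than `x`. Then an edge
`v` outside these seven edges shares an endpoint with `x` if and only if it shares
an endpoint with each `y i` or with each `z i`. -/
theorem stmt15 {V : Type*} [Fintype V] [DecidableEq V] (G : SimpleGraph V)
    [DecidableRel G.Adj] (a b : V) (hab : G.Adj a b)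
    (hdega : 4 ≤ G.degree a) (hdegb : 4 ≤ G.degree b)
    (y z : Fin 3 → Sym2 V) (hy : Function.Injective y) (hz : Function.Injective z)
    (hyE : ∀ i, y i ∈ G.edgeSet) (hzE : ∀ i, z i ∈ G.edgeSet)
    (hya : ∀ i, a ∈ y i) (hzb : ∀ i, b ∈ z i)
    (hyx : ∀ i, y i ≠ s(a, b)) (hzx : ∀ i, z i ≠ s(a, b))
    (v : Sym2 V) (hvE : v ∈ G.edgeSet)
    (hv : v ∉ ({s(a, b), y 0, y 1, y 2, z 0, z 1, z 2} : Set (Sym2 V))) :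
    (∃ w, w ∈ v ∧ w ∈ (s(a, b) : Sym2 V)) ↔
      ((∀ i, ∃ w, w ∈ v ∧ w ∈ y i) ∨ (∀ i, ∃ w, w ∈ v ∧ w ∈ z i)) := by
  constructor
  · rintro ⟨w, hwv, hwx⟩
    rcases Sym2.mem_iff.mp hwx with rfl | rfl
    · exact Or.inl fun i => ⟨w, hwv, hya i⟩
    · exact Or.inr fun i => ⟨w, hwv, hzb i⟩
  · rintro (h | h)
    · by_cases hav : a ∈ v
      · exact ⟨a, hav, Sym2.mem_mk_left a b⟩
      · exact absurd (edges_through_common_vertex hya hy hav h) id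
    · by_cases hbv : b ∈ v
      · exact ⟨b, hbv, Sym2.mem_mk_right a b⟩
      · exact absurd (edges_through_common_vertex hzb hz hbv h) id
end

section
/- Let (V, S) be a 3-uniform hypergraph, v ∈ V, and s_1 = {v, v_1, v_2}, s_2 = {v, v_3, v_4}, s_3 = {v, v_5, v_6} be hyperedges pairwise intersecting exactly at v (so v_1,...,v_6 are distinct and distinct from v). Let F' = {{v_i, v_j, v_k} : i ∈ {1,2}, j ∈ {3,4}, k ∈ {5,6}}. Then for any hyperedge s' ∈ S with s' ∉ F': v ∈ s' if and only if s' intersects each of s_1, s_2, s_3. -/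
/-- Let `(V, S)` be a 3-uniform hypergraph with hyperedges `s₁ = {v, v₁, v₂}`,
`s₂ = {v, v₃, v₄}`, `s₃ = {v, v₅, v₆}` pairwise intersecting exactly at `v`. For any
hyperedge `s'` not of the form `{vᵢ, vⱼ, vₖ}` with `i ∈ {1,2}`, `j ∈ {3,4}`,
`k ∈ {5,6}`: `v ∈ s'` iff `s'` intersects each of `s₁, s₂, s₃`. -/
theorem stmt17 {V : Type*} [Fintype V] [DecidableEq V]
    (S : Finset (Finset V)) (h3 : ∀ s ∈ S, s.card = 3)
    (v v₁ v₂ v₃ v₄ v₅ v₆ : V)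
    (hdistinct : ({v, v₁, v₂, v₃, v₄, v₅, v₆} : Finset V).card = 7)
    (hs₁ : ({v, v₁, v₂} : Finset V) ∈ S)
    (hs₂ : ({v, v₃, v₄} : Finset V) ∈ S)
    (hs₃ : ({v, v₅, v₆} : Finset V) ∈ S)
    (s' : Finset V) (hs' : s' ∈ S)
    (hF : ∀ i ∈ ({v₁, v₂} : Finset V), ∀ j ∈ ({v₃, v₄} : Finset V),
      ∀ k ∈ ({v₅, v₆} : Finset V), s' ≠ {i, j, k}) :
    v ∈ s' ↔
      ((s' ∩ {v, v₁, v₂}).Nonempty ∧ (s' ∩ {v, v₃, v₄}).Nonempty ∧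
        (s' ∩ {v, v₅, v₆}).Nonempty) := by
  -- extract distinctness
  have hlist : ({v, v₁, v₂, v₃, v₄, v₅, v₆} : Finset V)
      = ([v, v₁, v₂, v₃, v₄, v₅, v₆] : List V).toFinset := by simp
  have hnd : ([v, v₁, v₂, v₃, v₄, v₅, v₆] : List V).Nodup := by
    rw [← List.dedup_eq_self]
    apply (List.dedup_sublist _).eq_of_length
    have := hdistinct
    rw [hlist, List.card_toFinset] at this
    simp [this]
  simp only [List.nodup_cons, List.mem_cons, List.not_mem_nil, or_false,
    List.nodup_nil, and_true, not_or] at hnd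
  obtain ⟨⟨h01, h02, h03, h04, h05, h06⟩, ⟨h12, h13, h14, h15, h16⟩,
    ⟨h23, h24, h25, h26⟩, ⟨h34, h35, h36⟩, ⟨h45, h46⟩, h56⟩ := hnd
  constructor
  · intro hv
    exact ⟨⟨v, by simp [hv]⟩, ⟨v, by simp [hv]⟩, ⟨v, by simp [hv]⟩⟩
  · rintro ⟨⟨x, hx⟩, ⟨y, hy⟩, ⟨z, hz⟩⟩
    by_contra hv
    simp only [Finset.mem_inter, Finset.mem_insert, Finset.mem_singleton] at hx hy hz
    obtain ⟨hxs, hx'⟩ := hx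
    obtain ⟨hys, hy'⟩ := hy
    obtain ⟨hzs, hz'⟩ := hz
    have hx1 : x = v₁ ∨ x = v₂ := by
      rcases hx' with rfl|h|h
      · exact absurd hxs hv
      · exact Or.inl h
      · exact Or.inr h
    have hy1 : y = v₃ ∨ y = v₄ := by
      rcases hy' with rfl|h|h
      · exact absurd hys hv
      · exact Or.inl h
      · exact Or.inr h
    have hz1 : z = v₅ ∨ z = v₆ := by
      rcases hz' with rfl|h|h
      · exact absurd hzs hv
      · exact Or.inl h
      · exact Or.inr h
    have hxy : x ≠ y := by rcases hx1 with rfl|rfl <;> rcases hy1 with rfl|rfl <;> assumption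
    have hxz : x ≠ z := by rcases hx1 with rfl|rfl <;> rcases hz1 with rfl|rfl <;> assumption
    have hyz : y ≠ z := by rcases hy1 with rfl|rfl <;> rcases hz1 with rfl|rfl <;> assumption
    have hsub : ({x, y, z} : Finset V) ⊆ s' := by
      intro a ha; simp at ha; rcases ha with rfl|rfl|rfl <;> assumption
    have hcard : ({x, y, z} : Finset V).card = 3 := by
      rw [Finset.card_insert_of_notMem (by simp [hxy, hxz]),
        Finset.card_insert_of_notMem (by simp [hyz]), Finset.card_singleton]
    have heq : s' = ({x, y, z} : Finset V) :=
      (Finset.eq_of_subset_of_card_le hsub (by rw [hcard, h3 s' hs'])).symm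
    exact hF x (by simp [hx1]) y (by simp [hy1]) z (by simp [hz1]) heq
end

section
/- In the hypercube Q_n, the vertex v = 00...0 has functionality at least (n−1)/3: if v is a function of a set S of vertices of Q_n \ {v}, then |S| ≥ (n−1)/3. -/
open scoped Classical

/-- The hypercube `Q n`: vertices are binary sequences of length `n`, adjacent iff
their Hamming distance is 1. -/
def hypercube (n : ℕ) : SimpleGraph (Fin n → Bool) where
  Adj u v := hammingDist u v = 1
  symm := by
    constructor
    intro u v h
    rwa [hammingDist_comm]
  loopless := by
    constructor
    intro u h
    simp [hammingDist_self] at h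

/-! Let `T` be the set of coordinates at which some member of `S` of weight at most 3 is nonzero,
so `#T ≤ 3 #S`. If two coordinates `i ≠ j` lay outside `T`, the vertices `e_i` and `e_i + e_j`
would not belong to `S`, and no member of `S` could be adjacent to either of them: a neighbour of a
vertex of weight at most 2 has weight at most 3, hence support inside `T`, disjoint from the
support of that vertex, and two nonzero vectors with disjoint supports are at distance at least 2.
So `S` cannot distinguish `e_i` from `e_i + e_j`, although `0` is adjacent to the first and not
to the second. Hence at most one coordinate lies outside `T`, and `n ≤ 3 #S + 1`. -/

open Finset

section Hamming

variable {ι β : Type*} [Fintype ι] [DecidableEq β] [Zero β]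

theorem hammingNorm_le_hammingNorm_add_hammingDist (x y : ι → β) :
    hammingNorm x ≤ hammingNorm y + hammingDist y x := by
  simpa only [hammingDist_zero_left] using hammingDist_triangle 0 y x

theorem hammingDist_eq_hammingNorm_add_of_disjoint {x y : ι → β}
    (h : ∀ i, x i = 0 ∨ y i = 0) : hammingDist x y = hammingNorm x + hammingNorm y := by
  unfold hammingDist hammingNorm
  rw [← card_union_of_disjoint, ← filter_or]
  · congr 1
    ext i
    rcases h i with h | h <;> simp [h, eq_comm]
  · exact disjoint_filter.2 fun i _ hx hy => (h i).elim hx hy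

end Hamming

theorem hammingNorm_decide_mem {ι : Type*} [Fintype ι] [DecidableEq ι] (A : Finset ι) :
    hammingNorm (fun i => decide (i ∈ A)) = #A := by
  simp [hammingNorm, Bool.zero_eq_false]

theorem FunctionOf.adj_iff_of_forall_adj_iff {V : Type*} {G : SimpleGraph V} {y : V}
    {S : Finset V} (hS : FunctionOf G y S) {z₁ z₂ : V} (hy₁ : z₁ ≠ y) (hS₁ : z₁ ∉ S)
    (hy₂ : z₂ ≠ y) (hS₂ : z₂ ∉ S) (h : ∀ s ∈ S, G.Adj s z₁ ↔ G.Adj s z₂) :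
    G.Adj y z₁ ↔ G.Adj y z₂ := by
  obtain ⟨-, f, hf⟩ := hS
  have hB : (fun s : S => adjB G s.1 z₁) = fun s => adjB G s.1 z₂ := by
    funext s
    simp only [adjB, h s.1 s.2]
  rw [hf z₁ hy₁ hS₁, hf z₂ hy₂ hS₂, hB]

section SupportCover

variable {ι β : Type*} [Fintype ι] [DecidableEq ι] [DecidableEq β] [Zero β]

def supportCover (w : ℕ) (S : Finset (ι → β)) : Finset ι :=
  {s ∈ S | hammingNorm s ≤ w}.biUnion fun s => {i | s i ≠ 0}

theorem card_supportCover_le (w : ℕ) (S : Finset (ι → β)) : #(supportCover w S) ≤ w * #S :=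
  calc #(supportCover w S) ≤ #{s ∈ S | hammingNorm s ≤ w} * w :=
        card_biUnion_le_card_mul _ _ _ fun _ hs => (mem_filter.1 hs).2
    _ ≤ #S * w := Nat.mul_le_mul_right _ (card_filter_le _ _)
    _ = w * #S := mul_comm _ _

variable {w : ℕ} {S : Finset (ι → β)} {s z : ι → β}

theorem mem_supportCover (hs : s ∈ S) (hw : hammingNorm s ≤ w) {i : ι} (hi : s i ≠ 0) :
    i ∈ supportCover w S :=
  mem_biUnion.2 ⟨s, mem_filter.2 ⟨hs, hw⟩, by simpa using hi⟩

theorem notMem_of_avoids_supportCover (hz : z ≠ 0) (hzw : hammingNorm z ≤ w)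
    (hzS : ∀ i, z i ≠ 0 → i ∉ supportCover w S) : z ∉ S := fun hzS' => by
  obtain ⟨i, hi⟩ := Function.ne_iff.1 hz
  exact hzS i hi (mem_supportCover hzS' hzw hi)

theorem hammingDist_ne_one_of_avoids_supportCover (h0 : 0 ∉ S) (hs : s ∈ S) (hz : z ≠ 0)
    (hzw : hammingNorm z < w) (hzS : ∀ i, z i ≠ 0 → i ∉ supportCover w S) :
    hammingDist s z ≠ 1 := by
  intro hsz
  have hsw : hammingNorm s ≤ w := by
    have := hammingNorm_le_hammingNorm_add_hammingDist s z
    rw [hammingDist_comm] at this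
    omega
  have hdisj : ∀ i, s i = 0 ∨ z i = 0 := fun i => by
    by_contra! h
    exact hzS i h.2 (mem_supportCover hs hsw h.1)
  have hs0 : 0 < hammingNorm s := hammingNorm_pos_iff.2 (ne_of_mem_of_not_mem hs h0)
  have hz0 : 0 < hammingNorm z := hammingNorm_pos_iff.2 hz
  rw [hammingDist_eq_hammingNorm_add_of_disjoint hdisj] at hsz
  omega

end SupportCover

theorem card_compl_supportCover_le_one {n : ℕ} {S : Finset (Fin n → Bool)}
    (hS : FunctionOf (hypercube n) 0 S) : #(supportCover 3 S)ᶜ ≤ 1 := by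
  refine card_le_one.2 fun i hi j hj => by_contra fun hij => ?_
  rw [mem_compl] at hi hj
  let ind (A : Finset (Fin n)) : Fin n → Bool := fun k => decide (k ∈ A)
  have hidden (A : Finset (Fin n)) (hA : A.Nonempty) (hAij : A ⊆ {i, j}) :
      ind A ≠ 0 ∧ ind A ∉ S ∧ ∀ s ∈ S, ¬ (hypercube n).Adj s (ind A) := by
    have hnorm : hammingNorm (ind A) = #A := hammingNorm_decide_mem A
    have hA2 : #A < 3 := (card_le_card hAij).trans_lt ((card_insert_le _ _).trans_lt (by simp))
    have hz : ind A ≠ 0 := hammingNorm_pos_iff.1 (hnorm ▸ hA.card_pos)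
    have avoids : ∀ k, ind A k ≠ 0 → k ∉ supportCover 3 S := fun k hk => by
      have hkA : k ∈ A := by simpa [ind, Bool.zero_eq_false] using hk
      rcases mem_insert.1 (hAij hkA) with rfl | hk
      · exact hi
      · exact (mem_singleton.1 hk) ▸ hj
    exact ⟨hz, notMem_of_avoids_supportCover hz (hnorm ▸ hA2.le) avoids,
      fun s hs => hammingDist_ne_one_of_avoids_supportCover hS.1 hs hz (hnorm ▸ hA2) avoids⟩
  obtain ⟨hz₁, hS₁, hadj₁⟩ := hidden {i} (singleton_nonempty i) (by simp)
  obtain ⟨hz₂, hS₂, hadj₂⟩ := hidden {i, j} (insert_nonempty i {j}) subset_rfl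
  have := hS.adj_iff_of_forall_adj_iff hz₁ hS₁ hz₂ hS₂ fun s hs =>
    iff_of_false (hadj₁ s hs) (hadj₂ s hs)
  have hadj₀ (A : Finset (Fin n)) : (hypercube n).Adj 0 (ind A) ↔ #A = 1 := by
    change hammingDist 0 (ind A) = 1 ↔ _
    rw [hammingDist_zero_left, hammingNorm_decide_mem]
  rw [hadj₀, hadj₀, card_singleton, card_pair hij] at this
  exact absurd (this.1 rfl) (by decide)

/-- In the hypercube `Q n`, the all-zeros vertex has functionality at least
`(n-1)/3`: if it is a function of a set `S` of other vertices, then `n - 1 ≤ 3|S|`. -/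
theorem stmt19 (n : ℕ) (S : Finset (Fin n → Bool))
    (hS : FunctionOf (hypercube n) (fun _ => false) S) :
    n - 1 ≤ 3 * S.card := by
  have hcover := card_supportCover_le 3 S
  have hcompl := card_compl_supportCover_le_one hS
  have hsplit := card_add_card_compl (supportCover 3 S)
  rw [Fintype.card_fin] at hsplit
  omega
end
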